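/- arXiv:2506.22048 — 7 statements merged into one kernel-verified Lean document; each statement's English description precedes it below -/
import Mathlib

section
/- Let κ : M → ℂ be a function on M = {(r,s,γ) ∈ [0,∞)² × ℝ : |γ| ≤ r·s}, and suppose that for every d ∈ ℕ the function K_d(x,y) := κ(‖x‖, ‖y‖, ⟨x,y⟩) is a positive definite kernel on ℝ^d. Then K(x,y) := κ(‖x‖, ‖y‖, ⟨x,y⟩) is a positive definite kernel on ℓ², the Hilbert space of square-summable real sequences. -/
open scoped ComplexOrder

/-- `K` is a positive definite kernel on `X`. -/
def IsPDKernel {X : Type*} (K : X → X → ℂ) : Prop :=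
  ∀ (m : ℕ) (x : Fin m → X) (c : Fin m → ℂ),
    0 ≤ ∑ i, ∑ j, c i * (starRingEnd ℂ) (c j) * K (x i) (x j)

/-- The real Hilbert space `ℓ²` of square-summable sequences. -/
noncomputable abbrev ell2 : Type := lp (fun _ : ℕ => ℝ) 2

theorem pos_def_on_l2_of_pos_def_all_dims (κ : ℝ → ℝ → ℝ → ℂ)
    (h : ∀ d : ℕ, IsPDKernel
      (fun x y : EuclideanSpace ℝ (Fin d) => κ ‖x‖ ‖y‖ (inner ℝ x y))) :
    IsPDKernel (fun x y : ell2 => κ ‖x‖ ‖y‖ (inner ℝ x y)) := by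
  intro m x c
  set V := Submodule.span ℝ (Set.range x) with hV
  have hfin : FiniteDimensional ℝ V :=
    FiniteDimensional.span_of_finite ℝ (Set.finite_range x)
  set d := Module.finrank ℝ V with hd
  let e : V ≃ₗᵢ[ℝ] EuclideanSpace ℝ (Fin d) := (stdOrthonormalBasis ℝ V).repr
  let v : Fin m → V := fun i => ⟨x i, Submodule.subset_span ⟨i, rfl⟩⟩
  let y : Fin m → EuclideanSpace ℝ (Fin d) := fun i => e (v i)
  have hn : ∀ i, ‖y i‖ = ‖x i‖ := fun i => by
    simp only [y, e.norm_map]; rfl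
  have hi : ∀ i j, (inner ℝ (y i) (y j) : ℝ) = inner ℝ (x i) (x j) := fun i j => by
    rw [show (inner ℝ (y i) (y j) : ℝ) = inner ℝ (v i) (v j) from e.inner_map_map _ _]
    rfl
  have := h d m y c
  simpa only [hn, hi] using this
end

section
/- Suppose d ≥ 2 and K : ℝ^d × ℝ^d → ℂ is continuous and invariant under O(d), i.e. K(Ux, Uy) = K(x,y) for all orthogonal U. Then the function κ : M → ℂ with K(x,y) = κ(‖x‖, ‖y‖, ⟨x,y⟩), where M = {(r,s,γ) : r,s ≥ 0, |γ| ≤ rs}, is continuous on M. -/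
open EuclideanSpace

lemma smul_single' {d : ℕ} (i : Fin d) (c a : ℝ) :
    c • (EuclideanSpace.single i a) = EuclideanSpace.single i (c * a) := by
  ext j
  by_cases h : j = i <;> simp [EuclideanSpace.single_apply, PiLp.smul_apply, h]

lemma single_zero' {d : ℕ} (i : Fin d) : EuclideanSpace.single i (0:ℝ) = 0 := by
  ext j; simp [EuclideanSpace.single_apply]

lemma exists_basis_single {d : ℕ} (i : Fin d) (u : EuclideanSpace ℝ (Fin d))
    (hu : ‖u‖ = 1) :
    ∃ B : OrthonormalBasis (Fin d) ℝ (EuclideanSpace ℝ (Fin d)), B i = u := by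
  have hcard : Module.finrank ℝ (EuclideanSpace ℝ (Fin d)) = Fintype.card (Fin d) := by
    simp [finrank_euclideanSpace]
  have huu : (inner ℝ u u : ℝ) = 1 := by
    rw [real_inner_self_eq_norm_mul_norm, hu]; ring
  have horth : Orthonormal ℝ (Set.domRestrict {i} (fun _ : Fin d => u)) := by
    rw [orthonormal_iff_ite]
    rintro ⟨j, hj⟩ ⟨k, hk⟩
    simp only [Set.mem_singleton_iff] at hj hk
    subst hj; subst hk
    simpa using huu
  obtain ⟨B, hB⟩ := horth.exists_orthonormalBasis_extension_of_card_eq hcard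
  exact ⟨B, hB i rfl⟩

lemma exists_basis_pair {d : ℕ} (i0 i1 : Fin d) (hne : i0 ≠ i1)
    (u w : EuclideanSpace ℝ (Fin d)) (hu : ‖u‖ = 1) (hw : ‖w‖ = 1)
    (huw : (inner ℝ u w : ℝ) = 0) :
    ∃ B : OrthonormalBasis (Fin d) ℝ (EuclideanSpace ℝ (Fin d)), B i0 = u ∧ B i1 = w := by
  have hcard : Module.finrank ℝ (EuclideanSpace ℝ (Fin d)) = Fintype.card (Fin d) := by
    simp [finrank_euclideanSpace]
  have huu : (inner ℝ u u : ℝ) = 1 := by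
    rw [real_inner_self_eq_norm_mul_norm, hu]; ring
  have hww : (inner ℝ w w : ℝ) = 1 := by
    rw [real_inner_self_eq_norm_mul_norm, hw]; ring
  have hwu : (inner ℝ w u : ℝ) = 0 := by rw [real_inner_comm]; exact huw
  set v : Fin d → EuclideanSpace ℝ (Fin d) := fun i => if i = i0 then u else w with hv
  have horth : Orthonormal ℝ (Set.domRestrict {i0, i1} v) := by
    rw [orthonormal_iff_ite]
    rintro ⟨j, hj⟩ ⟨k, hk⟩
    simp only [Set.mem_insert_iff, Set.mem_singleton_iff] at hj hk
    simp only [Subtype.mk.injEq, Set.domRestrict_apply]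
    rcases hj with rfl | rfl <;> rcases hk with rfl | rfl <;>
      simp only [hv, if_pos rfl, if_neg hne, if_neg hne.symm, hne, hne.symm, if_true, if_false,
        eq_self_iff_true] <;>
      first
        | exact huu | exact hww | exact hwu | exact huw
        | (rw [if_neg hne]; exact huw) | (rw [if_neg hne.symm]; exact hwu)
  obtain ⟨B, hB⟩ := horth.exists_orthonormalBasis_extension_of_card_eq hcard
  refine ⟨B, ?_, ?_⟩
  · rw [hB i0 (by simp)]; simp [hv]
  · rw [hB i1 (by simp)]; simp [hv, hne.symm]

lemma canon {d : ℕ} (i0 i1 : Fin d) (hne : i0 ≠ i1) (x y : EuclideanSpace ℝ (Fin d)) :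
    ∃ U : EuclideanSpace ℝ (Fin d) ≃ₗᵢ[ℝ] EuclideanSpace ℝ (Fin d),
      U x = EuclideanSpace.single i0 ‖x‖ ∧
      U y = EuclideanSpace.single i0 (if ‖x‖ = 0 then 0 else (inner ℝ x y : ℝ) / ‖x‖) +
        EuclideanSpace.single i1
          (Real.sqrt (‖y‖ ^ 2 - (if ‖x‖ = 0 then 0 else (inner ℝ x y : ℝ) / ‖x‖) ^ 2)) := by
  by_cases hx : x = 0
  · subst hx
    simp only [norm_zero, if_pos rfl]
    by_cases hy : y = 0
    · subst hy
      exact ⟨LinearIsometryEquiv.refl ℝ _, by simp [single_zero'], by simp [single_zero']⟩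
    · have hs : ‖y‖ ≠ 0 := norm_ne_zero_iff.mpr hy
      have hu : ‖(‖y‖)⁻¹ • y‖ = 1 := by
        rw [norm_smul, norm_inv, norm_norm, inv_mul_cancel₀ hs]
      obtain ⟨B, hB⟩ := exists_basis_single i1 _ hu
      refine ⟨B.repr, by simp [single_zero'], ?_⟩
      have hy' : y = ‖y‖ • ((‖y‖)⁻¹ • y) := by
        rw [smul_smul, mul_inv_cancel₀ hs, one_smul]
      have hrepr : B.repr y = EuclideanSpace.single i1 ‖y‖ := by
        conv_lhs => rw [hy', ← hB]
        rw [map_smul, B.repr_self, smul_single', mul_one]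
      rw [hrepr]
      simp [Real.sqrt_sq (norm_nonneg y), single_zero']
  · have hr : ‖x‖ ≠ 0 := norm_ne_zero_iff.mpr hx
    have hr0 : (0:ℝ) < ‖x‖ := norm_pos_iff.mpr hx
    set r := ‖x‖ with hrdef
    set γ := (inner ℝ x y : ℝ) with hγ
    set a := γ / r with ha
    set w := y - (γ / r ^ 2) • x with hwdef
    simp only [if_neg hr]
    have hu : ‖r⁻¹ • x‖ = 1 := by
      rw [norm_smul, norm_inv, norm_norm, ← hrdef, inv_mul_cancel₀ hr]
    have hxw : (inner ℝ x w : ℝ) = 0 := by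
      rw [hwdef, inner_sub_right, real_inner_smul_right, real_inner_self_eq_norm_sq, ← hrdef,
        ← hγ]
      field_simp
      ring
    have hyw : y = (γ / r ^ 2) • x + w := by rw [hwdef]; abel
    have hiy : (inner ℝ y x : ℝ) = γ := by rw [hγ, real_inner_comm]
    have hw2 : ‖w‖ ^ 2 = ‖y‖ ^ 2 - a ^ 2 := by
      have h1 := norm_sub_sq_real y ((γ / r ^ 2) • x)
      rw [← hwdef, real_inner_smul_right, hiy, norm_smul, Real.norm_eq_abs, ← hrdef] at h1
      rw [h1, ha, mul_pow, sq_abs]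
      field_simp
      ring
    by_cases hw : w = 0
    · have hs2 : ‖y‖ ^ 2 - a ^ 2 = 0 := by
        rw [← hw2, hw, norm_zero]; ring
      have hy2 : y = (γ / r ^ 2) • x := by
        rw [hyw, hw, add_zero]
      obtain ⟨B, hB⟩ := exists_basis_single i0 _ hu
      refine ⟨B.repr, ?_, ?_⟩
      · have hx' : x = r • (r⁻¹ • x) := by
          rw [smul_smul, mul_inv_cancel₀ hr, one_smul]
        conv_lhs => rw [hx', ← hB]
        rw [map_smul, B.repr_self, smul_single', mul_one]
      · have hx' : x = r • (r⁻¹ • x) := by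
          rw [smul_smul, mul_inv_cancel₀ hr, one_smul]
        have hreprx : B.repr x = EuclideanSpace.single i0 r := by
          conv_lhs => rw [hx', ← hB]
          rw [map_smul, B.repr_self, smul_single', mul_one]
        conv_lhs => rw [hy2]
        rw [map_smul, hreprx, smul_single', hs2, Real.sqrt_zero]
        have : γ / r ^ 2 * r = a := by rw [ha]; field_simp
        rw [this, single_zero', add_zero]
    · have ht : ‖w‖ ≠ 0 := norm_ne_zero_iff.mpr hw
      have hvw : ‖(‖w‖)⁻¹ • w‖ = 1 := by
        rw [norm_smul, norm_inv, norm_norm, inv_mul_cancel₀ ht]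
      have huvw : (inner ℝ (r⁻¹ • x) ((‖w‖)⁻¹ • w) : ℝ) = 0 := by
        rw [real_inner_smul_left, real_inner_smul_right, hxw]
        ring
      obtain ⟨B, hB0, hB1⟩ := exists_basis_pair i0 i1 hne _ _ hu hvw huvw
      have hx' : x = r • (r⁻¹ • x) := by
        rw [smul_smul, mul_inv_cancel₀ hr, one_smul]
      have hreprx : B.repr x = EuclideanSpace.single i0 r := by
        conv_lhs => rw [hx', ← hB0]
        rw [map_smul, B.repr_self, smul_single', mul_one]
      have hw' : w = ‖w‖ • ((‖w‖)⁻¹ • w) := by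
        rw [smul_smul, mul_inv_cancel₀ ht, one_smul]
      have hreprw : B.repr w = EuclideanSpace.single i1 ‖w‖ := by
        conv_lhs => rw [hw', ← hB1]
        rw [map_smul, B.repr_self, smul_single', mul_one]
      refine ⟨B.repr, hreprx, ?_⟩
      have hsqrt : Real.sqrt (‖y‖ ^ 2 - a ^ 2) = ‖w‖ := by
        rw [← hw2, Real.sqrt_sq (norm_nonneg w)]
      conv_lhs => rw [hyw]
      rw [map_add, map_smul, hreprx, hreprw, smul_single', hsqrt]
      have : γ / r ^ 2 * r = a := by rw [ha]; field_simp
      rw [this]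

lemma sec_norm1 {d : ℕ} (i0 : Fin d) {r : ℝ} (hr : 0 ≤ r) :
    ‖EuclideanSpace.single i0 r‖ = r := by
  rw [EuclideanSpace.norm_single, Real.norm_eq_abs, abs_of_nonneg hr]

lemma sec_facts {d : ℕ} (i0 i1 : Fin d) (hne : i0 ≠ i1) (p : ℝ × ℝ × ℝ)
    (h1 : 0 ≤ p.1) (h2 : 0 ≤ p.2.1) (h3 : |p.2.2| ≤ p.1 * p.2.1) (a : ℝ)
    (ha : a = if p.1 = 0 then 0 else p.2.2 / p.1) :
    ‖EuclideanSpace.single i0 a +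
        EuclideanSpace.single i1 (Real.sqrt (p.2.1 ^ 2 - a ^ 2))‖ = p.2.1 ∧
    (inner ℝ (EuclideanSpace.single i0 p.1)
      (EuclideanSpace.single i0 a +
        EuclideanSpace.single i1 (Real.sqrt (p.2.1 ^ 2 - a ^ 2))) : ℝ) = p.2.2 := by
  have ha2 : a ^ 2 ≤ p.2.1 ^ 2 := by
    rw [ha]
    split_ifs with h
    · nlinarith [sq_nonneg p.2.1]
    · have hr0 : 0 < p.1 := lt_of_le_of_ne h1 (Ne.symm h)
      have habs : |p.2.2 / p.1| ≤ |p.2.1| := by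
        rw [abs_div, abs_of_nonneg h1, abs_of_nonneg h2, div_le_iff₀ hr0, mul_comm]
        exact h3
      calc (p.2.2 / p.1) ^ 2 = |p.2.2 / p.1| ^ 2 := (sq_abs _).symm
        _ ≤ |p.2.1| ^ 2 := by gcongr
        _ = p.2.1 ^ 2 := sq_abs _
  have hb2 : Real.sqrt (p.2.1 ^ 2 - a ^ 2) ^ 2 = p.2.1 ^ 2 - a ^ 2 :=
    Real.sq_sqrt (by linarith)
  have hcross : (inner ℝ (EuclideanSpace.single i0 a)
      (EuclideanSpace.single i1 (Real.sqrt (p.2.1 ^ 2 - a ^ 2))) : ℝ) = 0 := by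
    simp [EuclideanSpace.inner_single_left, EuclideanSpace.single_apply, hne.symm]
  constructor
  · have hsq : ‖EuclideanSpace.single i0 a +
        EuclideanSpace.single i1 (Real.sqrt (p.2.1 ^ 2 - a ^ 2))‖ ^ 2 = p.2.1 ^ 2 := by
      rw [norm_add_sq_real, hcross, EuclideanSpace.norm_single, EuclideanSpace.norm_single,
        Real.norm_eq_abs, Real.norm_eq_abs, sq_abs, sq_abs, hb2]
      ring
    calc ‖_ + _‖ = Real.sqrt (‖EuclideanSpace.single i0 a +
          EuclideanSpace.single i1 (Real.sqrt (p.2.1 ^ 2 - a ^ 2))‖ ^ 2) :=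
        (Real.sqrt_sq (norm_nonneg _)).symm
      _ = Real.sqrt (p.2.1 ^ 2) := by rw [hsq]
      _ = p.2.1 := Real.sqrt_sq h2
  · rw [inner_add_right]
    have h1' : (inner ℝ (EuclideanSpace.single i0 p.1)
        (EuclideanSpace.single i0 a) : ℝ) = p.1 * a := by
      simp [EuclideanSpace.inner_single_left, EuclideanSpace.single_apply]
    have h2' : (inner ℝ (EuclideanSpace.single i0 p.1)
        (EuclideanSpace.single i1 (Real.sqrt (p.2.1 ^ 2 - a ^ 2))) : ℝ) = 0 := by
      simp [EuclideanSpace.inner_single_left, EuclideanSpace.single_apply, hne.symm]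
    rw [h1', h2', add_zero, ha]
    split_ifs with h
    · have : |p.2.2| ≤ 0 := by rw [h] at h3; simpa using h3
      have := abs_nonneg p.2.2
      have hz : p.2.2 = 0 := abs_eq_zero.mp (le_antisymm ‹|p.2.2| ≤ 0› (abs_nonneg _))
      rw [hz]; ring
    · field_simp

theorem isotropic_continuous_kernel_representation_continuous {d : ℕ} (hd : 2 ≤ d)
    (K : EuclideanSpace ℝ (Fin d) → EuclideanSpace ℝ (Fin d) → ℂ)
    (hcont : Continuous fun p : EuclideanSpace ℝ (Fin d) × EuclideanSpace ℝ (Fin d) =>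
      K p.1 p.2)
    (hinv : ∀ U : EuclideanSpace ℝ (Fin d) ≃ₗᵢ[ℝ] EuclideanSpace ℝ (Fin d),
      ∀ x y, K (U x) (U y) = K x y) :
    ∃ κ : ℝ × ℝ × ℝ → ℂ,
      ContinuousOn κ {p : ℝ × ℝ × ℝ | 0 ≤ p.1 ∧ 0 ≤ p.2.1 ∧ |p.2.2| ≤ p.1 * p.2.1} ∧
      ∀ x y, K x y = κ (‖x‖, ‖y‖, (inner ℝ x y : ℝ)) := by
  set i0 : Fin d := ⟨0, by omega⟩ with hi0
  set i1 : Fin d := ⟨1, by omega⟩ with hi1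
  have hne : i0 ≠ i1 := by simp [hi0, hi1, Fin.ext_iff]
  set M : Set (ℝ × ℝ × ℝ) := {p : ℝ × ℝ × ℝ | 0 ≤ p.1 ∧ 0 ≤ p.2.1 ∧ |p.2.2| ≤ p.1 * p.2.1}
    with hM
  set A : ℝ × ℝ × ℝ → ℝ := fun p => if p.1 = 0 then 0 else p.2.2 / p.1 with hA
  set κ : ℝ × ℝ × ℝ → ℂ := fun p =>
    K (EuclideanSpace.single i0 p.1)
      (EuclideanSpace.single i0 (A p) +
        EuclideanSpace.single i1 (Real.sqrt (p.2.1 ^ 2 - (A p) ^ 2))) with hκ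
  have hK : ∀ x y, K x y = κ (‖x‖, ‖y‖, (inner ℝ x y : ℝ)) := by
    intro x y
    obtain ⟨U, hU1, hU2⟩ := canon i0 i1 hne x y
    rw [← hinv U x y, hU1, hU2, hκ]
  refine ⟨κ, ?_, hK⟩
  intro p hp
  obtain ⟨hp1, hp2, hp3⟩ := hp
  set R := p.1 + p.2.1 + 1 with hR
  set C : Set ((EuclideanSpace ℝ (Fin d)) × (EuclideanSpace ℝ (Fin d))) := Metric.closedBall 0 R ×ˢ Metric.closedBall 0 R with hC
  have hCcomp : IsCompact C :=
    (isCompact_closedBall (0 : (EuclideanSpace ℝ (Fin d))) R).prod (isCompact_closedBall (0 : (EuclideanSpace ℝ (Fin d))) R)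
  set Θ : (EuclideanSpace ℝ (Fin d)) × (EuclideanSpace ℝ (Fin d)) → ℝ × ℝ × ℝ := fun q => (‖q.1‖, ‖q.2‖, (inner ℝ q.1 q.2 : ℝ)) with hΘ
  have hΘc : Continuous Θ := by
    refine continuous_fst.norm.prodMk (continuous_snd.norm.prodMk ?_)
    exact continuous_fst.inner continuous_snd
  set T := Θ '' C with hT
  have hκΘ : ∀ q : (EuclideanSpace ℝ (Fin d)) × (EuclideanSpace ℝ (Fin d)), κ (Θ q) = K q.1 q.2 := fun q => (hK q.1 q.2).symm
  have hTc : ContinuousOn κ T := by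
    rw [continuousOn_iff_continuous_restrict, continuous_iff_isClosed]
    intro F hF
    have heq : T.domRestrict κ ⁻¹' F =
        Subtype.val ⁻¹' (Θ '' (C ∩ (fun q : (EuclideanSpace ℝ (Fin d)) × (EuclideanSpace ℝ (Fin d)) => K q.1 q.2) ⁻¹' F)) := by
      ext ⟨t, ht⟩
      simp only [Set.domRestrict_apply, Set.mem_preimage]
      constructor
      · intro hκt
        obtain ⟨q, hqC, hqt⟩ := ht
        exact ⟨q, ⟨hqC, by rw [Set.mem_preimage, ← hκΘ q, hqt]; exact hκt⟩, hqt⟩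
      · rintro ⟨q, ⟨hqC, hqF⟩, hqt⟩
        rw [← hqt, hκΘ q]
        exact hqF
    rw [heq]
    exact (((hCcomp.inter_right (hF.preimage hcont)).image hΘc).isClosed).preimage
      continuous_subtype_val
  have hmem : ∀ q : ℝ × ℝ × ℝ, q ∈ M → q.1 ≤ R → q.2.1 ≤ R → q ∈ T := by
    intro q hq hq1 hq2
    obtain ⟨hq01, hq02, hq03⟩ := hq
    obtain ⟨hsec1, hsec2⟩ := sec_facts i0 i1 hne q hq01 hq02 hq03 (A q) rfl
    refine ⟨(EuclideanSpace.single i0 q.1,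
      EuclideanSpace.single i0 (A q) +
        EuclideanSpace.single i1 (Real.sqrt (q.2.1 ^ 2 - (A q) ^ 2))), ⟨?_, ?_⟩, ?_⟩
    · rw [mem_closedBall_zero_iff, sec_norm1 i0 hq01]
      exact hq1
    · rw [mem_closedBall_zero_iff, hsec1]
      exact hq2
    · rw [hΘ]
      simp only
      rw [sec_norm1 i0 hq01, hsec1, hsec2]
  have hpT : p ∈ T := hmem p ⟨hp1, hp2, hp3⟩ (by rw [hR]; linarith) (by rw [hR]; linarith)
  have hnhd : T ∈ nhdsWithin p M := by
    rw [mem_nhdsWithin]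
    refine ⟨Metric.ball p 1, Metric.isOpen_ball, Metric.mem_ball_self one_pos, ?_⟩
    rintro q ⟨hqb, hqM⟩
    have hb1 : |q.1 - p.1| ≤ dist q p := by
      rw [Prod.dist_eq]
      exact le_trans (le_of_eq (Real.dist_eq q.1 p.1).symm) (le_max_left _ _)
    have hb2 : |q.2.1 - p.2.1| ≤ dist q p := by
      rw [Prod.dist_eq]
      refine le_trans ?_ (le_max_right _ _)
      rw [Prod.dist_eq]
      exact le_trans (le_of_eq (Real.dist_eq q.2.1 p.2.1).symm) (le_max_left _ _)
    have hq' : dist q p < 1 := Metric.mem_ball.mp hqb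
    have h1 : q.1 - p.1 ≤ |q.1 - p.1| := le_abs_self _
    have h2 : q.2.1 - p.2.1 ≤ |q.2.1 - p.2.1| := le_abs_self _
    exact hmem q hqM (by rw [hR]; have := hqM.2.1; linarith)
      (by rw [hR]; have := hqM.1; linarith)
  exact (hTc p hpT).mono_of_mem_nhdsWithin hnhd
end

section
/- Define φ, ψ : M_≥ → ℝ^d on M_≥ = {(r,s,γ) : r ≥ s ≥ 0, |γ| ≤ rs} by φ(r,s,γ) = r·e₁ and ψ(r,s,γ) = (γ/r)·e₁ + sqrt(s² − γ²/r²)·e₂ for r > 0 and ψ(0,0,0) = 0, where e₁, e₂ are orthonormal vectors in ℝ^d (d ≥ 2). Then φ and ψ are continuous on M_≥, and for θ = (r,s,γ) ∈ M_≥ one has ‖φ(θ)‖ = r, ‖ψ(θ)‖ = s, and ⟨φ(θ), ψ(θ)⟩ = γ. -/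
/-- The map `φ(r,s,γ) = r • e₁`. -/
noncomputable def phiMap {d : ℕ} (e₁ : EuclideanSpace ℝ (Fin d)) :
    ℝ × ℝ × ℝ → EuclideanSpace ℝ (Fin d) :=
  fun p => p.1 • e₁

/-- The map `ψ(r,s,γ) = (γ/r) • e₁ + sqrt(s² - γ²/r²) • e₂` for `r > 0`, `ψ(0,0,0) = 0`. -/
noncomputable def psiMap {d : ℕ} (e₁ e₂ : EuclideanSpace ℝ (Fin d)) :
    ℝ × ℝ × ℝ → EuclideanSpace ℝ (Fin d) :=
  fun p => if p.1 = 0 then 0 else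
    (p.2.2 / p.1) • e₁ + Real.sqrt (p.2.1 ^ 2 - p.2.2 ^ 2 / p.1 ^ 2) • e₂

/-- The set `M_≥ = {(r,s,γ) : r ≥ s ≥ 0, |γ| ≤ rs}`. -/
def Mge : Set (ℝ × ℝ × ℝ) := {p | p.2.1 ≤ p.1 ∧ 0 ≤ p.2.1 ∧ |p.2.2| ≤ p.1 * p.2.1}

lemma mem_Mge_r0 {p : ℝ × ℝ × ℝ} (hp : p ∈ Mge) (h : p.1 = 0) : p = (0, 0, 0) := by
  obtain ⟨h1, h2, h3⟩ := hp
  have hs : p.2.1 = 0 := le_antisymm (h ▸ h1) h2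
  have hg : p.2.2 = 0 := abs_eq_zero.mp (le_antisymm (by simpa [h] using h3) (abs_nonneg _))
  exact Prod.ext h (Prod.ext hs hg)

lemma psi_norm {d : ℕ} (e₁ e₂ : EuclideanSpace ℝ (Fin d)) (h1 : ‖e₁‖ = 1) (h2 : ‖e₂‖ = 1)
    (h12 : (inner ℝ e₁ e₂ : ℝ) = 0) {p : ℝ × ℝ × ℝ} (hp : p ∈ Mge) :
    ‖psiMap e₁ e₂ p‖ = p.2.1 := by
  by_cases h : p.1 = 0
  · have := mem_Mge_r0 hp h
    subst this
    simp [psiMap]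
  · obtain ⟨hsr, hs, hg⟩ := hp
    have hr : 0 < p.1 := lt_of_le_of_ne (hs.trans hsr) (Ne.symm h)
    set a := p.2.2 / p.1 with ha
    set b := Real.sqrt (p.2.1 ^ 2 - p.2.2 ^ 2 / p.1 ^ 2) with hb
    have hg2 : p.2.2 ^ 2 ≤ p.1 ^ 2 * p.2.1 ^ 2 := by
      have := sq_le_sq' (neg_le_of_abs_le hg) (le_of_abs_le hg)
      nlinarith
    have hnn : 0 ≤ p.2.1 ^ 2 - p.2.2 ^ 2 / p.1 ^ 2 := by
      rw [sub_nonneg, div_le_iff₀ (by positivity)]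
      nlinarith
    have hb2 : b ^ 2 = p.2.1 ^ 2 - p.2.2 ^ 2 / p.1 ^ 2 := Real.sq_sqrt hnn
    have key : ‖psiMap e₁ e₂ p‖ ^ 2 = p.2.1 ^ 2 := by
      have : psiMap e₁ e₂ p = a • e₁ + b • e₂ := by rw [ha, hb]; simp [psiMap, h]
      rw [this, norm_add_sq_real, norm_smul, norm_smul, real_inner_smul_left,
        real_inner_smul_right, h1, h2, h12]
      simp [mul_pow, sq_abs]
      rw [hb2, ha]
      field_simp
      ring
    have hψ : 0 ≤ ‖psiMap e₁ e₂ p‖ := norm_nonneg _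
    nlinarith [key, hψ, hs]

theorem phi_psi_continuous_and_invariants {d : ℕ} (hd : 2 ≤ d)
    (e₁ e₂ : EuclideanSpace ℝ (Fin d)) (h1 : ‖e₁‖ = 1) (h2 : ‖e₂‖ = 1)
    (h12 : (inner ℝ e₁ e₂ : ℝ) = 0) :
    ContinuousOn (phiMap e₁) Mge ∧ ContinuousOn (psiMap e₁ e₂) Mge ∧
      ∀ p ∈ Mge, ‖phiMap e₁ p‖ = p.1 ∧ ‖psiMap e₁ e₂ p‖ = p.2.1 ∧
        (inner ℝ (phiMap e₁ p) (psiMap e₁ e₂ p) : ℝ) = p.2.2 := by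
  refine ⟨?_, ?_, ?_⟩
  · exact (continuous_fst.smul continuous_const).continuousOn
  · intro p hp
    by_cases h : p.1 = 0
    · -- p = (0,0,0); use squeeze via psi_norm
      have hp0 := mem_Mge_r0 hp h
      have hv : psiMap e₁ e₂ p = 0 := by rw [hp0]; simp [psiMap]
      rw [ContinuousWithinAt, hv, tendsto_zero_iff_norm_tendsto_zero]
      have hcong : ∀ q ∈ Mge, ‖psiMap e₁ e₂ q‖ = q.2.1 :=
        fun q hq => psi_norm e₁ e₂ h1 h2 h12 hq
      have hlim : Filter.Tendsto (fun q : ℝ × ℝ × ℝ => q.2.1) (nhdsWithin p Mge) (nhds 0) := by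
        have : Filter.Tendsto (fun q : ℝ × ℝ × ℝ => q.2.1) (nhds p) (nhds p.2.1) :=
          (continuous_fst.comp continuous_snd).tendsto p
        have hs0 : p.2.1 = 0 := by rw [hp0]
        rw [hs0] at this
        exact this.mono_left nhdsWithin_le_nhds
      refine hlim.congr' ?_
      filter_upwards [self_mem_nhdsWithin] with q hq
      exact (hcong q hq).symm
    · -- continuous at p since p.1 ≠ 0
      have hopen : IsOpen {q : ℝ × ℝ × ℝ | q.1 ≠ 0} := isOpen_ne_fun continuous_fst continuous_const
      have heq : psiMap e₁ e₂ =ᶠ[nhds p]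
          (fun q => (q.2.2 / q.1) • e₁ + Real.sqrt (q.2.1 ^ 2 - q.2.2 ^ 2 / q.1 ^ 2) • e₂) := by
        filter_upwards [hopen.mem_nhds h] with q hq
        simp [psiMap, hq]
      have hc : ContinuousAt
          (fun q : ℝ × ℝ × ℝ => (q.2.2 / q.1) • e₁ +
            Real.sqrt (q.2.1 ^ 2 - q.2.2 ^ 2 / q.1 ^ 2) • e₂) p := by
        apply ContinuousAt.add
        · exact (ContinuousAt.div (continuous_snd.snd.continuousAt)
            continuous_fst.continuousAt h).smul continuousAt_const
        · refine ContinuousAt.smul (f := fun q : ℝ × ℝ × ℝ => Real.sqrt (q.2.1 ^ 2 - q.2.2 ^ 2 / q.1 ^ 2)) (g := fun _ => e₂) ?_ continuousAt_const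
          exact (Real.continuous_sqrt.continuousAt).comp
            ((continuous_snd.fst.pow 2).continuousAt.sub
              (ContinuousAt.div (continuous_snd.snd.pow 2).continuousAt
                (continuous_fst.pow 2).continuousAt (by positivity)))
      exact (hc.congr heq.symm).continuousWithinAt
  · intro p hp
    have hr0 : 0 ≤ p.1 := hp.2.1.trans hp.1
    refine ⟨?_, psi_norm e₁ e₂ h1 h2 h12 hp, ?_⟩
    · simp [phiMap, norm_smul, h1, abs_of_nonneg hr0]
    · by_cases h : p.1 = 0
      · have := mem_Mge_r0 hp h
        subst this
        simp [phiMap, psiMap]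
      · have hψ : psiMap e₁ e₂ p = (p.2.2 / p.1) • e₁ +
            Real.sqrt (p.2.1 ^ 2 - p.2.2 ^ 2 / p.1 ^ 2) • e₂ := by simp [psiMap, h]
        rw [phiMap, hψ, inner_add_right, real_inner_smul_left, real_inner_smul_left,
          real_inner_smul_right, real_inner_smul_right, h12, real_inner_self_eq_norm_sq, h1]
        field_simp
        ring
end

section
/- Let (α_n)_{n≥0} be a family of continuous positive definite kernels α_n : [0,∞)² → ℂ with ∑_n α_n(r,r) < ∞ for every r ≥ 0 and α_n(r,0) = α_n(0,r) = 0 for all r ≥ 0 and n ≥ 1. Then K : ℓ² × ℓ² → ℂ defined by K(x,y) = ∑_{n=0}^∞ α_n(‖x‖, ‖y‖) · ⟨x/‖x‖, y/‖y‖⟩^n (interpreting the n ≥ 1 terms as 0 when x = 0 or y = 0, and with the n = 0 term being α_0(‖x‖,‖y‖)) is a positive definite kernel on ℓ² invariant under all linear isometries of ℓ². -/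
open scoped ComplexOrder

/-- `K` is positive definite on the subset `S`. -/
def IsPDKernelOn {X : Type*} (K : X → X → ℂ) (S : Set X) : Prop :=
  ∀ (m : ℕ) (x : Fin m → X), (∀ i, x i ∈ S) → ∀ c : Fin m → ℂ,
    0 ≤ ∑ i, ∑ j, c i * (starRingEnd ℂ) (c j) * K (x i) (x j)

lemma key_bound (β : ℝ → ℝ → ℂ) (hβ : IsPDKernelOn β (Set.Ici 0)) {r s : ℝ}
    (hr : 0 ≤ r) (hs : 0 ≤ s) : ‖β r s‖ ≤ (β r r).re + (β s s).re := by
  have H : ∀ c1 c2 : ℂ, 0 ≤ c1 * (starRingEnd ℂ) c1 * β r r + c1 * (starRingEnd ℂ) c2 * β r s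
      + c2 * (starRingEnd ℂ) c1 * β s r + c2 * (starRingEnd ℂ) c2 * β s s := by
    intro c1 c2
    have := hβ 2 ![r, s] (by intro i; fin_cases i <;> simpa) ![c1, c2]
    simpa [Fin.sum_univ_two, add_assoc] using this
  have H10 := H 1 0
  have H01 := H 0 1
  have H11 := H 1 1
  have H1m := H 1 (-1)
  have HI := H 1 Complex.I
  have HmI := H 1 (-Complex.I)
  rw [Complex.le_def] at H10 H01 H11 H1m HI HmI
  simp [Complex.add_re, Complex.add_im, Complex.mul_re, Complex.mul_im, Complex.I_re,
    Complex.I_im, Complex.conj_re, Complex.conj_im] at H10 H01 H11 H1m HI HmI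
  obtain ⟨h1, h2⟩ := H10
  obtain ⟨h3, h4⟩ := H01
  obtain ⟨h5, h6⟩ := H11
  obtain ⟨h7, h8⟩ := H1m
  obtain ⟨h9, h10⟩ := HI
  obtain ⟨h11, h12⟩ := HmI
  calc ‖β r s‖ ≤ |(β r s).re| + |(β r s).im| := Complex.norm_le_abs_re_add_abs_im _
    _ ≤ (β r r).re + (β s s).re := by
      rcases abs_cases (β r s).re with ⟨e1, _⟩ | ⟨e1, _⟩ <;>
        rcases abs_cases (β r s).im with ⟨e2, _⟩ | ⟨e2, _⟩ <;> rw [e1, e2] <;> linarith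

lemma gram_decomp {m : ℕ} (v : Fin m → ell2) :
    ∃ D : Fin m → Fin m → ℝ, ∀ i j, (inner ℝ (v i) (v j) : ℝ) = ∑ k, D k i * D k j := by
  set G : Matrix (Fin m) (Fin m) ℝ := Matrix.of fun i j => (inner ℝ (v i) (v j) : ℝ) with hG
  have hpsd : G.PosSemidef := by
    refine Matrix.PosSemidef.of_dotProduct_mulVec_nonneg ?_ ?_
    · ext i j
      simp [Matrix.conjTranspose_apply, hG, real_inner_comm]
    · intro y
      have : dotProduct (star y) (G.mulVec y)
          = (inner ℝ (∑ i, y i • v i) (∑ j, y j • v j) : ℝ) := by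
        simp [dotProduct, Matrix.mulVec, hG, inner_sum, sum_inner,
          real_inner_smul_left, real_inner_smul_right, Finset.mul_sum, mul_comm, mul_assoc,
          mul_left_comm]
        rw [← real_inner_self_eq_norm_sq]
        simp only [sum_inner, inner_sum, real_inner_smul_left, real_inner_smul_right]
        exact Finset.sum_congr rfl fun i _ => Finset.sum_congr rfl fun j _ => by
          rw [real_inner_comm]
      rw [this]
      exact real_inner_self_nonneg
  obtain ⟨B, hB⟩ : ∃ B : Matrix (Fin m) (Fin m) ℝ, G = B.conjTranspose * B := by
    open scoped MatrixOrder in exact CStarAlgebra.nonneg_iff_eq_star_mul_self.mp hpsd.nonneg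
  refine ⟨fun k i => B k i, fun i j => ?_⟩
  have : G i j = (B.conjTranspose * B) i j := by rw [← hB]
  simpa [Matrix.mul_apply, Matrix.conjTranspose_apply, hG] using this

lemma per_n (β : ℝ → ℝ → ℂ) (hpd : IsPDKernelOn β (Set.Ici 0)) {m : ℕ}
    (r : Fin m → ℝ) (hr : ∀ i, r i ∈ Set.Ici 0) (v : Fin m → ell2) (n : ℕ) (c : Fin m → ℂ) :
    0 ≤ ∑ i, ∑ j, c i * (starRingEnd ℂ) (c j) *
      (β (r i) (r j) * ((inner ℝ (v i) (v j) : ℝ) : ℂ) ^ n) := by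
  obtain ⟨D, hD⟩ := gram_decomp v
  set E : (Fin n → Fin m) → Fin m → ℝ := fun f i => ∏ u, D (f u) i with hE
  have key : ∀ i j, (((inner ℝ (v i) (v j) : ℝ)) : ℂ) ^ n
      = ∑ f : Fin n → Fin m, ((E f i : ℝ) : ℂ) * ((E f j : ℝ) : ℂ) := by
    intro i j
    rw [hD i j]
    push_cast
    rw [Finset.sum_pow' Finset.univ (fun k => (D k i : ℂ) * (D k j : ℂ)) n]
    rw [Fintype.piFinset_univ]
    refine Finset.sum_congr rfl fun f _ => ?_
    rw [hE]
    push_cast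
    rw [Finset.prod_mul_distrib]
  have step : ∀ i j, c i * (starRingEnd ℂ) (c j) *
        (β (r i) (r j) * ((inner ℝ (v i) (v j) : ℝ) : ℂ) ^ n)
      = ∑ f : Fin n → Fin m, (c i * ((E f i : ℝ) : ℂ)) *
          (starRingEnd ℂ) (c j * ((E f j : ℝ) : ℂ)) * β (r i) (r j) := by
    intro i j
    rw [key, Finset.mul_sum, Finset.mul_sum]
    refine Finset.sum_congr rfl fun f _ => ?_
    rw [map_mul, Complex.conj_ofReal]
    ring
  simp only [step]
  have swap : (∑ i : Fin m, ∑ j : Fin m, ∑ f : Fin n → Fin m,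
        c i * ((E f i : ℝ) : ℂ) * (starRingEnd ℂ) (c j * ((E f j : ℝ) : ℂ)) * β (r i) (r j))
      = ∑ f : Fin n → Fin m, ∑ i : Fin m, ∑ j : Fin m,
        c i * ((E f i : ℝ) : ℂ) * (starRingEnd ℂ) (c j * ((E f j : ℝ) : ℂ)) * β (r i) (r j) := by
    rw [Finset.sum_congr rfl (fun i _ => Finset.sum_comm)]
    rw [Finset.sum_comm]
  rw [swap]
  refine Finset.sum_nonneg fun f _ => ?_
  exact hpd m r hr (fun i => c i * ((E f i : ℝ) : ℂ))

theorem series_representation_gives_isotropic_kernel (α : ℕ → ℝ → ℝ → ℂ)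
    (hα_cont : ∀ n, ContinuousOn (fun p : ℝ × ℝ => α n p.1 p.2)
      (Set.Ici 0 ×ˢ Set.Ici 0))
    (hα_pd : ∀ n, IsPDKernelOn (α n) (Set.Ici 0))
    (hα_sum : ∀ r : ℝ, 0 ≤ r → Summable fun n => α n r r)
    (hα_zero : ∀ n : ℕ, 1 ≤ n → ∀ r : ℝ, α n r 0 = 0 ∧ α n 0 r = 0)
    (K : ell2 → ell2 → ℂ)
    (hK : ∀ x y : ell2, K x y = ∑' n : ℕ,
      α n ‖x‖ ‖y‖ * ((inner ℝ ((‖x‖)⁻¹ • x) ((‖y‖)⁻¹ • y) : ℝ) : ℂ) ^ n) :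
    IsPDKernel K ∧ ∀ U : ell2 ≃ₗᵢ[ℝ] ell2, ∀ x y, K (U x) (U y) = K x y := by
  constructor
  · intro m x c
    set r : Fin m → ℝ := fun i => ‖x i‖ with hr
    set v : Fin m → ell2 := fun i => (‖x i‖)⁻¹ • x i with hv
    have hre : ∀ i, Summable fun n => (α n (r i) (r i)).re := fun i =>
      ((Complex.hasSum_iff _ _).mp (hα_sum (r i) (norm_nonneg _)).hasSum).1.summable
    have hvnorm : ∀ i, ‖v i‖ ≤ 1 := by
      intro i
      rw [hv]
      simp only [norm_smul, norm_inv, norm_norm]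
      rcases eq_or_ne (‖x i‖) 0 with h | h
      · simp [h]
      · rw [inv_mul_cancel₀ h]
    have htle : ∀ i j, ‖(((inner ℝ (v i) (v j) : ℝ)) : ℂ)‖ ≤ 1 := by
      intro i j
      rw [Complex.norm_real, Real.norm_eq_abs]
      calc |(inner ℝ (v i) (v j) : ℝ)| ≤ ‖v i‖ * ‖v j‖ := abs_real_inner_le_norm _ _
        _ ≤ 1 * 1 := mul_le_mul (hvnorm i) (hvnorm j) (norm_nonneg _) zero_le_one
        _ = 1 := mul_one 1
    have hf : ∀ i j, Summable fun n =>
        α n (r i) (r j) * ((inner ℝ (v i) (v j) : ℝ) : ℂ) ^ n := by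
      intro i j
      refine Summable.of_norm_bounded
        (g := fun n => (α n (r i) (r i)).re + (α n (r j) (r j)).re)
        ((hre i).add (hre j)) fun n => ?_
      rw [norm_mul, norm_pow]
      calc ‖α n (r i) (r j)‖ * ‖(((inner ℝ (v i) (v j) : ℝ)) : ℂ)‖ ^ n
          ≤ ‖α n (r i) (r j)‖ * 1 := by
            refine mul_le_mul_of_nonneg_left ?_ (norm_nonneg _)
            exact pow_le_one₀ (norm_nonneg _) (htle i j)
        _ = ‖α n (r i) (r j)‖ := mul_one _
        _ ≤ (α n (r i) (r i)).re + (α n (r j) (r j)).re :=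
            key_bound (α n) (hα_pd n) (norm_nonneg _) (norm_nonneg _)
    have hcf : ∀ i j, Summable fun n => c i * (starRingEnd ℂ) (c j) *
        (α n (r i) (r j) * ((inner ℝ (v i) (v j) : ℝ) : ℂ) ^ n) :=
      fun i j => (hf i j).mul_left _
    have hrw : ∀ i j, c i * (starRingEnd ℂ) (c j) * K (x i) (x j)
        = ∑' n, c i * (starRingEnd ℂ) (c j) *
            (α n (r i) (r j) * ((inner ℝ (v i) (v j) : ℝ) : ℂ) ^ n) := by
      intro i j
      rw [hK, ← tsum_mul_left]
    have h0 : (0 : ℂ) ≤ ∑' n, ∑ i, ∑ j, c i * (starRingEnd ℂ) (c j) *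
        (α n (r i) (r j) * ((inner ℝ (v i) (v j) : ℝ) : ℂ) ^ n) :=
      tsum_nonneg fun n => per_n (α n) (hα_pd n) r (fun i => norm_nonneg _) v n c
    have heq : (∑ i, ∑ j, c i * (starRingEnd ℂ) (c j) * K (x i) (x j))
        = ∑' n, ∑ i, ∑ j, c i * (starRingEnd ℂ) (c j) *
            (α n (r i) (r j) * ((inner ℝ (v i) (v j) : ℝ) : ℂ) ^ n) := by
      rw [Summable.tsum_finsetSum fun i _ => (hasSum_sum fun j _ => (hcf i j).hasSum).summable]
      refine Finset.sum_congr rfl fun i _ => ?_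
      rw [Summable.tsum_finsetSum fun j _ => hcf i j]
      exact Finset.sum_congr rfl fun j _ => hrw i j
    rw [heq]
    exact h0
  · intro U x y
    rw [hK, hK]
    refine tsum_congr fun n => ?_
    rw [U.norm_map, U.norm_map, ← U.map_smul, ← U.map_smul, U.inner_map_map]
end

section
/- Let K be a continuous O(∞)-invariant positive definite kernel on ℓ² with representation K(x,y) = ∑_{n≥0} α_n(‖x‖,‖y‖) ⟨x/‖x‖, y/‖y‖⟩^n where the α_n : (0,∞)² → ℂ are continuous positive definite kernels with ∑_n α_n(r,r) < ∞ for all r > 0. Then for each n ≥ 1, α_n(r,r) → 0 as r → 0. -/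
open scoped ComplexOrder

set_option maxHeartbeats 1000000 in
theorem coefficient_kernels_vanish_at_origin (K : ell2 → ell2 → ℂ)
    (hcont : Continuous fun p : ell2 × ell2 => K p.1 p.2)
    (hpd : IsPDKernel K)
    (hinv : ∀ U : ell2 ≃ₗᵢ[ℝ] ell2, ∀ x y, K (U x) (U y) = K x y)
    (α : ℕ → ℝ → ℝ → ℂ)
    (hα_cont : ∀ n, ContinuousOn (fun p : ℝ × ℝ => α n p.1 p.2)
      (Set.Ioi 0 ×ˢ Set.Ioi 0))
    (hα_pd : ∀ n, IsPDKernelOn (α n) (Set.Ioi 0))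
    (hα_sum : ∀ r : ℝ, 0 < r → Summable fun n => α n r r)
    (hrep : ∀ x y : ell2, x ≠ 0 → y ≠ 0 → K x y = ∑' n : ℕ,
      α n ‖x‖ ‖y‖ * ((inner ℝ ((‖x‖)⁻¹ • x) ((‖y‖)⁻¹ • y) : ℝ) : ℂ) ^ n) :
    ∀ n : ℕ, 1 ≤ n →
      Filter.Tendsto (fun r => α n r r) (nhdsWithin 0 (Set.Ioi 0)) (nhds 0) := by
  classical
  intro n hn
  set e₁ : ell2 := lp.single 2 0 (1:ℝ) with he₁
  set e₂ : ell2 := lp.single 2 1 (1:ℝ) with he₂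
  have hne1 : ‖e₁‖ = 1 := by
    rw [he₁]; simpa using lp.norm_single (p := 2) (by norm_num) (fun _ : ℕ => (1:ℝ)) 0
  have hne2 : ‖e₂‖ = 1 := by
    rw [he₂]; simpa using lp.norm_single (p := 2) (by norm_num) (fun _ : ℕ => (1:ℝ)) 1
  have hinner11 : (inner ℝ e₁ e₁ : ℝ) = 1 := by
    rw [real_inner_self_eq_norm_sq, hne1]; norm_num
  have hinner12 : (inner ℝ e₁ e₂ : ℝ) = 0 := by
    rw [he₁, lp.inner_single_left]
    simp [he₂, lp.single_apply]
  have hpos : ∀ (k : ℕ) (r : ℝ), 0 < r → 0 ≤ α k r r := by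
    intro k r hr
    have := hα_pd k 1 (fun _ => r) (fun _ => hr) (fun _ => 1)
    simpa using this
  have hposre : ∀ (k : ℕ) (r : ℝ), 0 < r → 0 ≤ (α k r r).re := by
    intro k r hr
    have h := (Complex.le_def.1 (hpos k r hr)).1
    simpa using h
  have him : ∀ (k : ℕ) (r : ℝ), 0 < r → α k r r = ((α k r r).re : ℂ) := by
    intro k r hr
    have h := (Complex.le_def.1 (hpos k r hr)).2
    exact (Complex.ext (by simp) (by simp [← h])).symm
  -- norms and normalizations
  have hnorm1 : ∀ r : ℝ, 0 < r → ‖r • e₁‖ = r := fun r hr => by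
    rw [norm_smul, hne1, Real.norm_eq_abs, abs_of_pos hr, mul_one]
  have hnorm2 : ∀ r : ℝ, 0 < r → ‖r • e₂‖ = r := fun r hr => by
    rw [norm_smul, hne2, Real.norm_eq_abs, abs_of_pos hr, mul_one]
  have hx0 : ∀ r : ℝ, 0 < r → r • e₁ ≠ 0 := fun r hr => by
    rw [← norm_ne_zero_iff, hnorm1 r hr]; exact hr.ne'
  have hy0 : ∀ r : ℝ, 0 < r → r • e₂ ≠ 0 := fun r hr => by
    rw [← norm_ne_zero_iff, hnorm2 r hr]; exact hr.ne'
  have hunit : ∀ (r : ℝ), 0 < r → ∀ e : ell2, r⁻¹ • (r • e) = e := fun r hr e => by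
    rw [smul_smul, inv_mul_cancel₀ hr.ne', one_smul]
  have hx : ∀ r : ℝ, 0 < r → K (r • e₁) (r • e₁) = ∑' k, α k r r := by
    intro r hr
    rw [hrep _ _ (hx0 r hr) (hx0 r hr), hnorm1 r hr, hunit r hr, hinner11]
    simp
  have hy : ∀ r : ℝ, 0 < r → K (r • e₁) (r • e₂) = α 0 r r := by
    intro r hr
    rw [hrep _ _ (hx0 r hr) (hy0 r hr), hnorm1 r hr, hnorm2 r hr, hunit r hr, hunit r hr,
      hinner12]
    rw [tsum_eq_single 0 (fun k hk => by simp [zero_pow hk])]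
    simp
  -- continuity of the difference at 0 within Ioi 0
  have hc1 : Continuous fun r : ℝ => K (r • e₁) (r • e₁) :=
    hcont.comp ((continuous_id.smul continuous_const).prodMk
      (continuous_id.smul continuous_const))
  have hc2 : Continuous fun r : ℝ => K (r • e₁) (r • e₂) :=
    hcont.comp ((continuous_id.smul continuous_const).prodMk
      (continuous_id.smul continuous_const))
  have hA : Filter.Tendsto (fun r : ℝ => K (r • e₁) (r • e₁) - K (r • e₁) (r • e₂))
      (nhdsWithin 0 (Set.Ioi 0)) (nhds 0) := by
    have h := ((hc1.sub hc2).tendsto 0).mono_left (nhdsWithin_le_nhds (s := Set.Ioi (0:ℝ)))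
    simpa [Pi.sub_def] using h
  have hRe : Filter.Tendsto (fun r : ℝ =>
      (K (r • e₁) (r • e₁) - K (r • e₁) (r • e₂)).re)
      (nhdsWithin 0 (Set.Ioi 0)) (nhds 0) := by
    have := (Complex.continuous_re.tendsto 0).comp hA
    simpa [Function.comp_def] using this
  have key : ∀ r : ℝ, 0 < r →
      (α n r r).re ≤ (K (r • e₁) (r • e₁) - K (r • e₁) (r • e₂)).re := by
    intro r hr
    rw [hx r hr, hy r hr, Complex.sub_re, Complex.re_tsum (hα_sum r hr)]
    have hs : Summable fun k => (α k r r).re :=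
      (Complex.hasSum_re (hα_sum r hr).hasSum).summable
    have hs1 : Summable fun k => (α (k + 1) r r).re := (summable_nat_add_iff 1).2 hs
    rw [Summable.tsum_eq_zero_add hs]
    have hle : (α n r r).re ≤ ∑' k, (α (k + 1) r r).re := by
      have h := Summable.le_tsum hs1 (n - 1) (fun j _ => hposre (j + 1) r hr)
      have e : n - 1 + 1 = n := by omega
      rwa [e] at h
    linarith
  have hre_tendsto : Filter.Tendsto (fun r => (α n r r).re)
      (nhdsWithin 0 (Set.Ioi 0)) (nhds 0) := by
    apply tendsto_of_tendsto_of_tendsto_of_le_of_le' tendsto_const_nhds hRe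
    · filter_upwards [self_mem_nhdsWithin] with r hr
      exact hposre n r hr
    · filter_upwards [self_mem_nhdsWithin] with r hr
      exact key r hr
  have hfin := (Complex.continuous_ofReal.tendsto 0).comp hre_tendsto
  apply Filter.Tendsto.congr' ?_ (by simpa using hfin)
  filter_upwards [self_mem_nhdsWithin] with r hr
  exact (him n r hr).symm
end

section
/- Let a_n ≥ 0 with ∑_n a_n t^n < ∞ for all t, and K(x,y) = ∑_{n≥0} a_n ⟨x,y⟩^n on ℓ². If K is strictly positive definite on ℓ², then a_n > 0 for infinitely many even indices n and for infinitely many odd indices n. -/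
open scoped ComplexOrder

/-- `K` is a strictly positive definite kernel on `X`. -/
def IsStrictPDKernel {X : Type*} (K : X → X → ℂ) : Prop :=
  ∀ (m : ℕ) (x : Fin m → X), Function.Injective x → ∀ c : Fin m → ℂ, c ≠ 0 →
    0 < ∑ i, ∑ j, c i * (starRingEnd ℂ) (c j) * K (x i) (x j)

noncomputable def e0 : ell2 := lp.single 2 0 1

lemma inner_smul_e0 (r s : ℝ) : (inner ℝ (r • e0) (s • e0) : ℝ) = r * s := by
  rw [real_inner_smul_left, real_inner_smul_right]
  have : (inner ℝ e0 e0 : ℝ) = 1 := by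
    rw [e0, lp.inner_single_left]
    simp [lp.single_apply_self, RCLike.inner_apply]
  rw [this]; ring

lemma smul_e0_injective : Function.Injective (fun r : ℝ => r • e0) := by
  intro r s h
  have := congrArg (fun f : ell2 => (f : ∀ n, ℝ) 0) h
  simpa [lp.coeFn_smul, e0, lp.single_apply_self] using this

lemma summable_aux (a : ℕ → ℝ) (ha : ∀ n, 0 ≤ a n)
    (hsum : ∀ t : ℝ, Summable fun n => a n * t ^ n) (u : ℝ) :
    Summable (fun n => (a n : ℂ) * (u : ℂ) ^ n) := by
  apply Summable.of_norm
  have : (fun n => ‖(a n : ℂ) * (u : ℂ) ^ n‖) = fun n => a n * |u| ^ n := by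
    funext n
    rw [norm_mul, norm_pow, Complex.norm_real, Complex.norm_real, Real.norm_eq_abs,
      Real.norm_eq_abs, abs_of_nonneg (ha n)]
  rw [this]; exact hsum |u|

lemma core (a : ℕ → ℝ) (ha : ∀ n, 0 ≤ a n) (hsum : ∀ t : ℝ, Summable fun n => a n * t ^ n)
    (K : ell2 → ell2 → ℂ)
    (hK : ∀ x y : ell2, K x y = ∑' n : ℕ, (a n : ℂ) * ((inner ℝ x y : ℝ) : ℂ) ^ n)
    (hspd : IsStrictPDKernel K) (e : ℝ) (he : e = 1 ∨ e = -1)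
    (T : Finset ℕ) (hT : ∀ n ∉ T, a n * (1 + e * (-1 : ℝ) ^ n) = 0) : False := by
  classical
  set m := T.card + 1 with hm
  set t : Fin m → ℝ := fun i => (i : ℕ) + 1 with ht
  have htpos : ∀ i, 0 < t i := fun i => by positivity
  have htinj : Function.Injective t := by
    intro i j h
    have : ((i : ℕ) : ℝ) = ((j : ℕ) : ℝ) := by simpa [ht] using h
    exact Fin.ext (by exact_mod_cast this)
  have hnotli : ¬ LinearIndependent ℂ
      (fun i : Fin m => fun n : {n // n ∈ T} => ((t i : ℂ)) ^ (n : ℕ)) := by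
    intro hli
    have := hli.fintype_card_le_finrank
    simp only [Module.finrank_pi, Fintype.card_fin, Fintype.card_coe] at this
    omega
  obtain ⟨c, hc, i0, hi0⟩ := Fintype.not_linearIndependent_iff.mp hnotli
  have hcn : ∀ n ∈ T, ∑ i, c i * (t i : ℂ) ^ n = 0 := by
    intro n hn
    have := congrFun hc ⟨n, hn⟩
    simpa using this
  have he2 : (e : ℂ) * (e : ℂ) = 1 := by rcases he with rfl | rfl <;> norm_num
  set F : ℝ → ℂ := fun u => ∑' n : ℕ, (a n : ℂ) * (u : ℂ) ^ n with hF
  have hFe : ∀ u : ℝ, F u + (e : ℂ) * F (-u)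
      = ∑ n ∈ T, ((a n * (1 + e * (-1 : ℝ) ^ n) : ℝ) : ℂ) * (u : ℂ) ^ n := by
    intro u
    have h1 : (e : ℂ) * F (-u) = ∑' n : ℕ, (e : ℂ) * ((a n : ℂ) * ((-u : ℝ) : ℂ) ^ n) := by
      rw [hF]; exact (tsum_mul_left).symm
    rw [h1, hF]
    rw [← Summable.tsum_add (summable_aux a ha hsum u) ((summable_aux a ha hsum (-u)).mul_left _)]
    have h2 : ∀ n : ℕ, (a n : ℂ) * (u : ℂ) ^ n + (e : ℂ) * ((a n : ℂ) * ((-u : ℝ) : ℂ) ^ n)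
        = ((a n * (1 + e * (-1 : ℝ) ^ n) : ℝ) : ℂ) * (u : ℂ) ^ n := by
      intro n; push_cast; ring
    simp_rw [h2]
    apply tsum_eq_sum
    intro n hn
    rw [hT n hn]; simp
  set x : Fin (m + m) → ell2 := Fin.append (fun i => t i • e0) (fun i => (-(t i)) • e0) with hx
  set c' : Fin (m + m) → ℂ := Fin.append c (fun i => (e : ℂ) * c i) with hc'def
  have hxinj : Function.Injective x := by
    have hs : Function.Injective (Fin.append t (fun i => -(t i))) := by
      intro i j
      induction i using Fin.addCases with
      | left i =>
        induction j using Fin.addCases with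
        | left j =>
          intro h
          simp only [Fin.append_left] at h
          exact congrArg _ (htinj h)
        | right j =>
          intro h
          simp only [Fin.append_left, Fin.append_right] at h
          nlinarith [htpos i, htpos j]
      | right i =>
        induction j using Fin.addCases with
        | left j =>
          intro h
          simp only [Fin.append_left, Fin.append_right] at h
          nlinarith [htpos i, htpos j]
        | right j =>
          intro h
          simp only [Fin.append_right, neg_inj] at h
          exact congrArg _ (htinj h)
    have hxeq : x = fun i => (Fin.append t (fun i => -(t i)) i) • e0 := by
      funext i
      induction i using Fin.addCases with
      | left i => simp only [hx, Fin.append_left]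
      | right i =>
        simp only [hx, Fin.append_right, neg_smul]
    rw [hxeq]
    exact smul_e0_injective.comp hs
  have hc'0 : c' ≠ 0 := by
    intro h0
    apply hi0
    have := congrFun h0 (Fin.castAdd m i0)
    simpa [hc'def, Fin.append_left] using this
  have hKval : ∀ r s : ℝ, K (r • e0) (s • e0) = F (r * s) := by
    intro r s; rw [hK, inner_smul_e0]
  have hpos := hspd (m + m) x hxinj c' hc'0
  have hQ : (∑ i, ∑ j, c' i * (starRingEnd ℂ) (c' j) * K (x i) (x j)) = 0 := by
    have hsplit : ∀ f : Fin (m + m) → ℂ,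
        ∑ i, f i = (∑ i : Fin m, f (Fin.castAdd m i)) + ∑ i : Fin m, f (Fin.natAdd m i) :=
      fun f => Fin.sum_univ_add f
    rw [hsplit]
    simp only [hsplit, hx, hc'def, Fin.append_left, Fin.append_right, hKval,
      map_mul, Complex.conj_ofReal, mul_neg, neg_mul, neg_neg]
    simp only [← Finset.sum_add_distrib]
    have per : ∀ i j : Fin m,
        (c i * (starRingEnd ℂ) (c j) * F (t i * t j)
          + c i * ((e : ℂ) * (starRingEnd ℂ) (c j)) * F (-(t i * t j))
          + ((e : ℂ) * c i * (starRingEnd ℂ) (c j) * F (-(t i * t j))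
            + (e : ℂ) * c i * ((e : ℂ) * (starRingEnd ℂ) (c j)) * F (t i * t j)))
        = ∑ n ∈ T, (2 * ((a n * (1 + e * (-1 : ℝ) ^ n) : ℝ) : ℂ))
            * (c i * ((t i : ℝ) : ℂ) ^ n) * ((starRingEnd ℂ) (c j) * ((t j : ℝ) : ℂ) ^ n) := by
      intro i j
      rw [show (c i * (starRingEnd ℂ) (c j) * F (t i * t j)
          + c i * ((e : ℂ) * (starRingEnd ℂ) (c j)) * F (-(t i * t j))
          + ((e : ℂ) * c i * (starRingEnd ℂ) (c j) * F (-(t i * t j))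
            + (e : ℂ) * c i * ((e : ℂ) * (starRingEnd ℂ) (c j)) * F (t i * t j)))
          = 2 * (c i * (starRingEnd ℂ) (c j)) * (F (t i * t j) + (e : ℂ) * F (-(t i * t j)))
        from by linear_combination (c i * (starRingEnd ℂ) (c j) * F (t i * t j)) * he2]
      rw [hFe (t i * t j), Finset.mul_sum]
      refine Finset.sum_congr rfl fun n _ => ?_
      push_cast
      ring
    simp_rw [per]
    have swap1 : ∀ i : Fin m, (∑ j : Fin m, ∑ n ∈ T, (2 * ((a n * (1 + e * (-1 : ℝ) ^ n) : ℝ) : ℂ))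
            * (c i * ((t i : ℝ) : ℂ) ^ n) * ((starRingEnd ℂ) (c j) * ((t j : ℝ) : ℂ) ^ n))
        = ∑ n ∈ T, ∑ j : Fin m, (2 * ((a n * (1 + e * (-1 : ℝ) ^ n) : ℝ) : ℂ))
            * (c i * ((t i : ℝ) : ℂ) ^ n) * ((starRingEnd ℂ) (c j) * ((t j : ℝ) : ℂ) ^ n) :=
      fun i => Finset.sum_comm
    simp_rw [swap1]
    rw [Finset.sum_comm]
    refine Finset.sum_eq_zero fun n hn => ?_
    have factor : (∑ i : Fin m, ∑ j : Fin m, (2 * ((a n * (1 + e * (-1 : ℝ) ^ n) : ℝ) : ℂ))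
            * (c i * ((t i : ℝ) : ℂ) ^ n) * ((starRingEnd ℂ) (c j) * ((t j : ℝ) : ℂ) ^ n))
        = (∑ i : Fin m, c i * ((t i : ℝ) : ℂ) ^ n)
          * (∑ j : Fin m, (2 * ((a n * (1 + e * (-1 : ℝ) ^ n) : ℝ) : ℂ))
              * ((starRingEnd ℂ) (c j) * ((t j : ℝ) : ℂ) ^ n)) := by
      rw [Finset.sum_mul_sum]
      exact Finset.sum_congr rfl fun i _ => Finset.sum_congr rfl fun j _ => by ring
    rw [factor, hcn n hn, zero_mul]
  rw [hQ] at hpos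
  exact lt_irrefl 0 hpos

theorem strict_pos_def_needs_infinitely_many_even_and_odd (a : ℕ → ℝ)
    (ha : ∀ n, 0 ≤ a n) (hsum : ∀ t : ℝ, Summable fun n => a n * t ^ n)
    (K : ell2 → ell2 → ℂ)
    (hK : ∀ x y : ell2, K x y = ∑' n : ℕ, (a n : ℂ) * ((inner ℝ x y : ℝ) : ℂ) ^ n)
    (hspd : IsStrictPDKernel K) :
    {n : ℕ | Even n ∧ 0 < a n}.Infinite ∧ {n : ℕ | Odd n ∧ 0 < a n}.Infinite := by
  have hzero : ∀ n : ℕ, ¬ 0 < a n → a n = 0 := fun n h => le_antisymm (not_lt.mp h) (ha n)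
  constructor
  · by_contra hfin
    rw [Set.not_infinite] at hfin
    refine core a ha hsum K hK hspd 1 (Or.inl rfl) hfin.toFinset fun n hn => ?_
    rw [Set.Finite.mem_toFinset, Set.mem_setOf_eq] at hn
    rcases Nat.even_or_odd n with hev | hod
    · have : a n = 0 := hzero n fun h => hn ⟨hev, h⟩
      rw [this, zero_mul]
    · rw [hod.neg_one_pow]; ring
  · by_contra hfin
    rw [Set.not_infinite] at hfin
    refine core a ha hsum K hK hspd (-1) (Or.inr rfl) hfin.toFinset fun n hn => ?_
    rw [Set.Finite.mem_toFinset, Set.mem_setOf_eq] at hn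
    rcases Nat.even_or_odd n with hev | hod
    · rw [hev.neg_one_pow]; ring
    · have : a n = 0 := hzero n fun h => hn ⟨hod, h⟩
      rw [this, zero_mul]
end

section
/- Let μ be a finite Borel measure on [0,∞) and define K : ℓ² × ℓ² → ℝ by K(x,y) = ∫_{[0,∞)} exp(−s²‖x−y‖²/2) dμ(s). Then K admits the expansion K(x,y) = ∑_{k=0}^∞ α_k(‖x‖,‖y‖) ⟨x/‖x‖, y/‖y‖⟩^k where α_k(r,t) = (1/k!) ∫_{[0,∞)} φ_k(s r) φ_k(s t) dμ(s) with φ_k(u) = exp(−u²/2) u^k, and each α_k is a positive definite kernel on [0,∞) vanishing when either argument is 0 (for k ≥ 1). -/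
open MeasureTheory

private lemma pow_div_factorial_le_exp' {x : ℝ} (hx : 0 ≤ x) (k : ℕ) :
    x ^ k / k.factorial ≤ Real.exp x :=
  le_trans (Finset.single_le_sum (f := fun i => x ^ i / i.factorial)
    (fun i _ => by positivity) (Finset.self_mem_range_succ k))
    (Real.sum_le_exp_of_nonneg hx _)

private lemma phi_abs_le' (k : ℕ) (v : ℝ) :
    |Real.exp (-v ^ 2 / 2) * v ^ k| ≤ (k.factorial : ℝ) := by
  have hfac : (1 : ℝ) ≤ k.factorial := by
    exact_mod_cast Nat.one_le_iff_ne_zero.mpr k.factorial_ne_zero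
  have h2 : (v ^ 2) ^ k ≤ (k.factorial : ℝ) * Real.exp (v ^ 2) := by
    have h := pow_div_factorial_le_exp' (sq_nonneg v) k
    have hf : (0:ℝ) < k.factorial := by positivity
    rw [div_le_iff₀ hf] at h
    linarith
  have he : Real.exp (-v ^ 2 / 2) ^ 2 = Real.exp (-v ^ 2) := by
    rw [pow_two, ← Real.exp_add]; ring_nf
  have h3 : (Real.exp (-v ^ 2 / 2) * v ^ k) ^ 2 = Real.exp (-v ^ 2) * (v ^ 2) ^ k := by
    rw [mul_pow, he, pow_right_comm]
  have hee : Real.exp (-v ^ 2) * Real.exp (v ^ 2) = 1 := by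
    rw [← Real.exp_add, neg_add_cancel, Real.exp_zero]
  have h4 : (Real.exp (-v ^ 2 / 2) * v ^ k) ^ 2 ≤ ((k.factorial : ℝ)) ^ 2 := by
    rw [h3]
    nlinarith [mul_le_mul_of_nonneg_left h2 (Real.exp_pos (-v^2)).le, hee, hfac,
      Real.exp_pos (-v^2)]
  calc |Real.exp (-v ^ 2 / 2) * v ^ k| = Real.sqrt ((Real.exp (-v ^ 2 / 2) * v ^ k) ^ 2) :=
        (Real.sqrt_sq_eq_abs _).symm
    _ ≤ Real.sqrt (((k.factorial : ℝ)) ^ 2) := Real.sqrt_le_sqrt h4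
    _ = (k.factorial : ℝ) := Real.sqrt_sq (by positivity)

private lemma integrable_phi_mul' (μ : Measure ℝ) [IsFiniteMeasure μ] (k l : ℕ) (r t : ℝ) :
    Integrable
      (fun s => (Real.exp (-(s * r) ^ 2 / 2) * (s * r) ^ k) *
        (Real.exp (-(s * t) ^ 2 / 2) * (s * t) ^ l)) (μ.restrict (Set.Ici 0)) := by
  have hc : Continuous fun s : ℝ => (Real.exp (-(s * r) ^ 2 / 2) * (s * r) ^ k) *
      (Real.exp (-(s * t) ^ 2 / 2) * (s * t) ^ l) := by fun_prop
  refine (integrable_const ((k.factorial : ℝ) * l.factorial)).mono'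
    hc.aestronglyMeasurable ?_
  filter_upwards with s
  rw [Real.norm_eq_abs, abs_mul]
  exact mul_le_mul (phi_abs_le' k _) (phi_abs_le' l _) (abs_nonneg _) (Nat.cast_nonneg _)

/-- A real-valued kernel is positive definite on the subset `S`. -/
def IsRealPDKernelOn (K : ℝ → ℝ → ℝ) (S : Set ℝ) : Prop :=
  ∀ (m : ℕ) (x : Fin m → ℝ), (∀ i, x i ∈ S) → ∀ c : Fin m → ℝ,
    0 ≤ ∑ i, ∑ j, c i * c j * K (x i) (x j)

theorem schoenberg_kernel_expansion (μ : MeasureTheory.Measure ℝ)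
    [MeasureTheory.IsFiniteMeasure μ]
    (K : ell2 → ell2 → ℝ)
    (hK : ∀ x y : ell2,
      K x y = ∫ s in Set.Ici (0 : ℝ), Real.exp (-(s ^ 2 * ‖x - y‖ ^ 2) / 2) ∂μ)
    (α : ℕ → ℝ → ℝ → ℝ)
    (hα : ∀ (k : ℕ) (r t : ℝ), α k r t = (1 / (Nat.factorial k : ℝ)) *
      ∫ s in Set.Ici (0 : ℝ),
        (Real.exp (-(s * r) ^ 2 / 2) * (s * r) ^ k) *
        (Real.exp (-(s * t) ^ 2 / 2) * (s * t) ^ k) ∂μ) :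
    (∀ x y : ell2, K x y = ∑' k : ℕ,
      α k ‖x‖ ‖y‖ * ((inner ℝ ((‖x‖)⁻¹ • x) ((‖y‖)⁻¹ • y) : ℝ)) ^ k) ∧
    (∀ k, IsRealPDKernelOn (α k) (Set.Ici 0)) ∧
    (∀ k : ℕ, 1 ≤ k → ∀ r : ℝ, α k r 0 = 0 ∧ α k 0 r = 0) := by
  refine ⟨?_, ?_, ?_⟩
  · -- expansion
    intro x y
    set r : ℝ := ‖x‖ with hr
    set t : ℝ := ‖y‖ with ht
    set w : ℝ := (inner ℝ ((r)⁻¹ • x) ((t)⁻¹ • y) : ℝ) with hw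
    set b : ℝ := (inner ℝ x y : ℝ) with hb
    -- key scalar identity
    have hrtw : r * t * w = b := by
      rcases eq_or_ne x 0 with hx0 | hx0
      · simp [hb, hx0, hr]
      rcases eq_or_ne y 0 with hy0 | hy0
      · simp [hb, hy0, ht]
      have hr0 : r ≠ 0 := by simpa [hr] using hx0
      have ht0 : t ≠ 0 := by simpa [ht] using hy0
      rw [hw, real_inner_smul_left, real_inner_smul_right, ← hb]
      field_simp
    have hbc : |b| ≤ (r ^ 2 + t ^ 2) / 2 := by
      have h1 : |b| ≤ r * t := abs_real_inner_le_norm x y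
      nlinarith [sq_nonneg (r - t)]
    set g : ℕ → ℝ → ℝ := fun k s =>
      (1 / (Nat.factorial k : ℝ)) *
        (Real.exp (-(s ^ 2 * (r ^ 2 + t ^ 2)) / 2) * (s ^ 2 * b) ^ k) with hg
    have hA : ∀ k : ℕ, α k r t * w ^ k = ∫ s in Set.Ici (0 : ℝ), g k s ∂μ := by
      intro k
      have hpt : ∀ s : ℝ, ((1 / (Nat.factorial k : ℝ)) * w ^ k) *
          ((Real.exp (-(s * r) ^ 2 / 2) * (s * r) ^ k) *
            (Real.exp (-(s * t) ^ 2 / 2) * (s * t) ^ k)) = g k s := by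
        intro s
        have e1 : Real.exp (-(s * r) ^ 2 / 2) * Real.exp (-(s * t) ^ 2 / 2)
            = Real.exp (-(s ^ 2 * (r ^ 2 + t ^ 2)) / 2) := by
          rw [← Real.exp_add]; ring_nf
        have e2 : (s * r) ^ k * ((s * t) ^ k * w ^ k) = (s ^ 2 * b) ^ k := by
          rw [← mul_pow, ← mul_pow]
          congr 1
          rw [← hrtw]; ring
        calc ((1 / (Nat.factorial k : ℝ)) * w ^ k) *
            ((Real.exp (-(s * r) ^ 2 / 2) * (s * r) ^ k) *
              (Real.exp (-(s * t) ^ 2 / 2) * (s * t) ^ k))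
            = (1 / (Nat.factorial k : ℝ)) *
              ((Real.exp (-(s * r) ^ 2 / 2) * Real.exp (-(s * t) ^ 2 / 2)) *
                ((s * r) ^ k * ((s * t) ^ k * w ^ k))) := by ring
          _ = g k s := by rw [e1, e2, hg]
      calc α k r t * w ^ k
          = ((1 / (Nat.factorial k : ℝ)) * w ^ k) *
            ∫ s in Set.Ici (0 : ℝ),
              (Real.exp (-(s * r) ^ 2 / 2) * (s * r) ^ k) *
              (Real.exp (-(s * t) ^ 2 / 2) * (s * t) ^ k) ∂μ := by rw [hα]; ring
        _ = ∫ s in Set.Ici (0 : ℝ), ((1 / (Nat.factorial k : ℝ)) * w ^ k) *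
              ((Real.exp (-(s * r) ^ 2 / 2) * (s * r) ^ k) *
              (Real.exp (-(s * t) ^ 2 / 2) * (s * t) ^ k)) ∂μ :=
            (integral_const_mul _ _).symm
        _ = ∫ s in Set.Ici (0 : ℝ), g k s ∂μ :=
            integral_congr_ae (Filter.Eventually.of_forall fun s => hpt s)
    have habs : ∀ (i : ℕ) (s : ℝ), |g i s| =
        Real.exp (-(s ^ 2 * (r ^ 2 + t ^ 2)) / 2) * ((s ^ 2 * |b|) ^ i / (Nat.factorial i : ℝ)) := by
      intro i s
      rw [hg]
      rw [abs_mul, abs_mul, abs_pow, abs_mul, abs_of_nonneg (Real.exp_pos _).le,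
        abs_of_nonneg (sq_nonneg s),
        abs_of_nonneg (by positivity : (0:ℝ) ≤ 1 / (Nat.factorial i : ℝ))]
      ring
    have hsum_le : ∀ (n : ℕ) (s : ℝ), ∑ i ∈ Finset.range n, |g i s| ≤ 1 := by
      intro n s
      have h1 : ∑ i ∈ Finset.range n, |g i s|
          = Real.exp (-(s ^ 2 * (r ^ 2 + t ^ 2)) / 2) *
            ∑ i ∈ Finset.range n, (s ^ 2 * |b|) ^ i / (Nat.factorial i : ℝ) := by
        rw [Finset.mul_sum]
        exact Finset.sum_congr rfl fun i _ => habs i s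
      rw [h1]
      calc Real.exp (-(s ^ 2 * (r ^ 2 + t ^ 2)) / 2) *
            ∑ i ∈ Finset.range n, (s ^ 2 * |b|) ^ i / (Nat.factorial i : ℝ)
          ≤ Real.exp (-(s ^ 2 * (r ^ 2 + t ^ 2)) / 2) * Real.exp (s ^ 2 * |b|) :=
            mul_le_mul_of_nonneg_left
              (Real.sum_le_exp_of_nonneg (by positivity) n) (Real.exp_pos _).le
        _ = Real.exp (-(s ^ 2 * (r ^ 2 + t ^ 2)) / 2 + s ^ 2 * |b|) := (Real.exp_add _ _).symm
        _ ≤ 1 := by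
            rw [Real.exp_le_one_iff]
            nlinarith [mul_le_mul_of_nonneg_left hbc (sq_nonneg s)]
    have hg_abs_le : ∀ (i : ℕ) (s : ℝ), |g i s| ≤ 1 := by
      intro i s
      refine le_trans ?_ (hsum_le (i + 1) s)
      exact Finset.single_le_sum (f := fun j => |g j s|) (fun j _ => abs_nonneg _)
        (Finset.self_mem_range_succ i)
    have hg_int : ∀ i : ℕ, Integrable (g i) (μ.restrict (Set.Ici 0)) := by
      intro i
      have hc : Continuous (g i) := by rw [hg]; fun_prop
      refine (integrable_const (1 : ℝ)).mono' hc.aestronglyMeasurable ?_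
      filter_upwards with s
      simpa [Real.norm_eq_abs] using hg_abs_le i s
    have hg_summable : Summable fun i : ℕ => ∫ s in Set.Ici (0 : ℝ), ‖g i s‖ ∂μ := by
      refine summable_of_sum_range_le (c := (μ (Set.Ici 0)).toReal)
        (fun n => integral_nonneg fun s => norm_nonneg _) ?_
      intro n
      rw [← integral_finset_sum _ (fun i _ => (hg_int i).norm)]
      calc ∫ s in Set.Ici (0 : ℝ), ∑ i ∈ Finset.range n, ‖g i s‖ ∂μ
          ≤ ∫ _ in Set.Ici (0 : ℝ), (1 : ℝ) ∂μ :=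
            integral_mono (integrable_finset_sum _ fun i _ => (hg_int i).norm)
              (integrable_const 1) (fun s => by
                simpa [Real.norm_eq_abs] using hsum_le n s)
        _ = (μ (Set.Ici 0)).toReal := by simp; rfl
    have htsum : ∀ s : ℝ, ∑' i : ℕ, g i s = Real.exp (-(s ^ 2 * ‖x - y‖ ^ 2) / 2) := by
      intro s
      have h1 : ∀ i : ℕ, g i s = Real.exp (-(s ^ 2 * (r ^ 2 + t ^ 2)) / 2) *
          ((s ^ 2 * b) ^ i / (Nat.factorial i : ℝ)) := by
        intro i; rw [hg]; ring
      rw [tsum_congr h1, tsum_mul_left]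
      have hexp : Real.exp (s ^ 2 * b) = ∑' n : ℕ, (s ^ 2 * b) ^ n / (Nat.factorial n : ℝ) := by
        rw [Real.exp_eq_exp_ℝ, NormedSpace.exp_eq_tsum_div]
      rw [← hexp, ← Real.exp_add]
      have hnorm : ‖x - y‖ ^ 2 = r ^ 2 - 2 * b + t ^ 2 := by
        rw [hb, hr, ht]; exact norm_sub_sq_real x y
      rw [hnorm]
      ring_nf
    rw [hK]
    calc ∫ s in Set.Ici (0 : ℝ), Real.exp (-(s ^ 2 * ‖x - y‖ ^ 2) / 2) ∂μ
        = ∫ s in Set.Ici (0 : ℝ), ∑' i : ℕ, g i s ∂μ :=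
          integral_congr_ae (Filter.Eventually.of_forall fun s => (htsum s).symm)
      _ = ∑' i : ℕ, ∫ s in Set.Ici (0 : ℝ), g i s ∂μ :=
          (integral_tsum_of_summable_integral_norm hg_int hg_summable).symm
      _ = ∑' i : ℕ, α i r t * w ^ i := tsum_congr fun i => (hA i).symm
  · -- positive definiteness
    intro k m xs _ c
    set f : Fin m → ℝ → ℝ := fun i s =>
      Real.exp (-(s * xs i) ^ 2 / 2) * (s * xs i) ^ k with hf
    have hint : ∀ i j : Fin m,
        Integrable (fun s => (c i * c j) * (f i s * f j s)) (μ.restrict (Set.Ici 0)) :=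
      fun i j => (integrable_phi_mul' μ k k (xs i) (xs j)).const_mul _
    have key : ∑ i, ∑ j, c i * c j * α k (xs i) (xs j)
        = (1 / (Nat.factorial k : ℝ)) *
          ∫ s in Set.Ici (0 : ℝ), (∑ i, c i * f i s) ^ 2 ∂μ := by
      have h1 : ∀ i j : Fin m, c i * c j * α k (xs i) (xs j)
          = (1 / (Nat.factorial k : ℝ)) *
            ∫ s in Set.Ici (0 : ℝ), (c i * c j) * (f i s * f j s) ∂μ := by
        intro i j
        rw [hα, integral_const_mul]
        ring
      simp_rw [h1, ← Finset.mul_sum]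
      congr 1
      have h2 : ∀ i : Fin m, ∑ j, ∫ s in Set.Ici (0 : ℝ), (c i * c j) * (f i s * f j s) ∂μ
          = ∫ s in Set.Ici (0 : ℝ), ∑ j, (c i * c j) * (f i s * f j s) ∂μ :=
        fun i => (integral_finset_sum _ fun j _ => hint i j).symm
      simp_rw [h2]
      rw [← integral_finset_sum _ (fun i _ => integrable_finset_sum _ fun j _ => hint i j)]
      refine integral_congr_ae (Filter.Eventually.of_forall fun s => ?_)
      show ∑ i, ∑ j, c i * c j * (f i s * f j s) = (∑ i, c i * f i s) ^ 2
      rw [sq, Finset.sum_mul_sum]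
      exact Finset.sum_congr rfl fun i _ => Finset.sum_congr rfl fun j _ => by ring
    rw [key]
    exact mul_nonneg (by positivity) (integral_nonneg fun s => sq_nonneg _)
  · -- vanishing
    intro k hk r
    have hk0 : k ≠ 0 := by omega
    constructor <;>
      · rw [hα]
        simp [mul_zero, zero_pow hk0]
end
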